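/- Let a, b ∈ ℝ^D with a ≠ b, let N ≥ 2 and 1 ≤ t ≤ N-1 be integers, and define the noiseless sequence x_i = a for 1 ≤ i ≤ t and x_i = b for t < i ≤ N. For an integer split point τ with 1 ≤ τ ≤ t, the two-segment within-cluster sum of squares g(τ) = Σ_{i=1}^{τ} ‖x_i - μ̄(0,τ)‖² + Σ_{i=τ+1}^{N} ‖x_i - μ̄(τ,N)‖² equals (t-τ)(N-t)/(N-τ) · ‖a-b‖², and in particular g is strictly decreasing in τ on {1,…,t}. -/
import Mathlib


noncomputable def segMean {D : ℕ} (x : ℕ → EuclideanSpace ℝ (Fin D)) (a b : ℕ) :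
    EuclideanSpace ℝ (Fin D) :=
  ((b : ℝ) - (a : ℝ))⁻¹ • ∑ i ∈ Finset.Ioc a b, x i

/-- two-segment within-cluster sum of squares with split point τ on indices 1..N -/
noncomputable def splitCost {D : ℕ} (x : ℕ → EuclideanSpace ℝ (Fin D)) (N τ : ℕ) : ℝ :=
  ∑ i ∈ Finset.Ioc 0 τ, ‖x i - segMean x 0 τ‖ ^ 2
    + ∑ i ∈ Finset.Ioc τ N, ‖x i - segMean x τ N‖ ^ 2

theorem stmt_9 (D N t : ℕ) (hN : 2 ≤ N) (ht1 : 1 ≤ t) (ht2 : t ≤ N - 1)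
    (a b : EuclideanSpace ℝ (Fin D)) (hab : a ≠ b)
    (x : ℕ → EuclideanSpace ℝ (Fin D))
    (hx : ∀ i, 1 ≤ i → i ≤ N → x i = if i ≤ t then a else b) :
    (∀ τ : ℕ, 1 ≤ τ → τ ≤ t →
      splitCost x N τ
        = ((t : ℝ) - (τ : ℝ)) * ((N : ℝ) - (t : ℝ)) / ((N : ℝ) - (τ : ℝ)) * ‖a - b‖ ^ 2) ∧
    (∀ τ τ' : ℕ, 1 ≤ τ → τ < τ' → τ' ≤ t → splitCost x N τ' < splitCost x N τ) := by
  have htN : t < N := by omega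
  have hc : (0:ℝ) < ‖a - b‖ ^ 2 := by
    have h : a - b ≠ 0 := sub_ne_zero.mpr hab
    have h2 : ‖a - b‖ ≠ 0 := norm_ne_zero_iff.mpr h
    positivity
  have key : ∀ τ : ℕ, 1 ≤ τ → τ ≤ t →
      splitCost x N τ = ((t:ℝ)-(τ:ℝ)) * ((N:ℝ)-(t:ℝ)) / ((N:ℝ)-(τ:ℝ)) * ‖a - b‖ ^ 2 := by
    intro τ hτ1 hτt
    have hτN : τ ≤ N := by omega
    have htN' : t ≤ N := by omega
    set p : ℝ := (t:ℝ) - τ with hpdef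
    set q : ℝ := (N:ℝ) - t with hqdef
    set r : ℝ := (N:ℝ) - τ with hrdef
    have hp : 0 ≤ p := by rw [hpdef]; simp; exact_mod_cast hτt
    have hq : 0 < q := by rw [hqdef]; simp; exact_mod_cast htN
    have hr : 0 < r := by rw [hrdef]; simp; exact_mod_cast lt_of_le_of_lt hτt htN
    have hr0 : r ≠ 0 := ne_of_gt hr
    have hrpq : r = p + q := by rw [hrdef, hpdef, hqdef]; ring
    have hxa : ∀ i ∈ Finset.Ioc 0 τ, x i = a := by
      intro i hi
      simp only [Finset.mem_Ioc] at hi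
      rw [hx i hi.1 (le_trans hi.2 hτN), if_pos (le_trans hi.2 hτt)]
    have hxa2 : ∀ i ∈ Finset.Ioc τ t, x i = a := by
      intro i hi
      simp only [Finset.mem_Ioc] at hi
      rw [hx i (by omega) (by omega), if_pos hi.2]
    have hxb : ∀ i ∈ Finset.Ioc t N, x i = b := by
      intro i hi
      simp only [Finset.mem_Ioc] at hi
      rw [hx i (by omega) hi.2, if_neg (by omega)]
    have hmean1 : segMean x 0 τ = a := by
      unfold segMean
      rw [Finset.sum_congr rfl hxa, Finset.sum_const, Nat.card_Ioc,
        ← Nat.cast_smul_eq_nsmul ℝ, smul_smul]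
      have hτ0 : (τ:ℝ) ≠ 0 := Nat.cast_ne_zero.mpr (by omega)
      simp [inv_mul_cancel₀ hτ0]
    have hsum : ∑ i ∈ Finset.Ioc τ N, x i = p • a + q • b := by
      rw [← Finset.sum_Ioc_consecutive _ hτt htN',
        Finset.sum_congr rfl hxa2, Finset.sum_congr rfl hxb,
        Finset.sum_const, Finset.sum_const, Nat.card_Ioc, Nat.card_Ioc,
        ← Nat.cast_smul_eq_nsmul ℝ, ← Nat.cast_smul_eq_nsmul ℝ]
      rw [hpdef, hqdef]
      congr 2 <;> push_cast [Nat.cast_sub, hτt, htN'] <;> ring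
    have hmean2 : segMean x τ N = r⁻¹ • (p • a + q • b) := by
      unfold segMean
      rw [hsum]
    have hda : a - segMean x τ N = (q / r) • (a - b) := by
      rw [hmean2]
      match_scalars <;> field_simp <;> linarith [hrpq]
    have hdb : b - segMean x τ N = (p / r) • (b - a) := by
      rw [hmean2]
      match_scalars <;> field_simp <;> linarith [hrpq]
    have hnorm : ‖b - a‖ = ‖a - b‖ := norm_sub_rev _ _
    unfold splitCost
    have h1 : ∑ i ∈ Finset.Ioc 0 τ, ‖x i - segMean x 0 τ‖ ^ 2 = 0 := by
      refine Finset.sum_eq_zero fun i hi => ?_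
      rw [hxa i hi, hmean1, sub_self, norm_zero]
      ring
    have h2 : ∑ i ∈ Finset.Ioc τ N, ‖x i - segMean x τ N‖ ^ 2
        = p * ((q / r) ^ 2 * ‖a - b‖ ^ 2) + q * ((p / r) ^ 2 * ‖a - b‖ ^ 2) := by
      rw [← Finset.sum_Ioc_consecutive _ hτt htN']
      have e1 : ∑ i ∈ Finset.Ioc τ t, ‖x i - segMean x τ N‖ ^ 2
          = p * ((q / r) ^ 2 * ‖a - b‖ ^ 2) := by
        rw [Finset.sum_congr rfl (fun i hi => by
          rw [hxa2 i hi, hda, norm_smul, mul_pow, Real.norm_eq_abs, sq_abs])]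
        rw [Finset.sum_const, Nat.card_Ioc, nsmul_eq_mul, hpdef]
        push_cast [Nat.cast_sub hτt]
        ring
      have e2 : ∑ i ∈ Finset.Ioc t N, ‖x i - segMean x τ N‖ ^ 2
          = q * ((p / r) ^ 2 * ‖a - b‖ ^ 2) := by
        rw [Finset.sum_congr rfl (fun i hi => by
          rw [hxb i hi, hdb, norm_smul, mul_pow, Real.norm_eq_abs, sq_abs, hnorm])]
        rw [Finset.sum_const, Nat.card_Ioc, nsmul_eq_mul, hqdef]
        push_cast [Nat.cast_sub htN']
        ring
      rw [e1, e2]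
    rw [h1, h2, zero_add, hrpq]
    have hpq0 : p + q ≠ 0 := by rw [← hrpq]; exact hr0
    field_simp
    ring
  refine ⟨key, fun τ τ' hτ1 hlt hτ't => ?_⟩
  rw [key τ' (by omega) hτ't, key τ (by omega) (by omega)]
  have hττ' : (τ:ℝ) < τ' := by exact_mod_cast hlt
  have hτ'tR : (τ':ℝ) ≤ t := by exact_mod_cast hτ't
  have htNR : (t:ℝ) < N := by exact_mod_cast htN
  have h : ((t:ℝ)-τ') * ((N:ℝ)-t) / ((N:ℝ)-τ') < ((t:ℝ)-τ) * ((N:ℝ)-t) / ((N:ℝ)-τ) := by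
    rw [div_lt_div_iff₀ (by linarith) (by linarith)]
    nlinarith [mul_pos (mul_pos (sub_pos.mpr htNR) (sub_pos.mpr htNR)) (sub_pos.mpr hττ')]
  exact mul_lt_mul_of_pos_right h hc
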